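/- Let n ≥ 3, let δ = (1 2) and r = (1 2 … n) in S_n, and let dist denote the word metric on S_n with respect to the generating set {δ, r, r^{-1}}. For integers i, j, the distance between r^i and r^j equals the Lee distance min(|i - j| mod n, n - (|i - j| mod n)). -/

import Mathlib

/-!
Identify `Fin n` with `ℤ_n` via `ZMod.finEquiv`; the Lee norm of `a : ZMod n` is
`a.valMinAbs.natAbs`. Each of `δ, r, r⁻¹` moves every point of `ℤ_n` by at most one, so the Lee
norm of `g 0` grows by at most one per letter and bounds the word length of `g` from below.
Since `r ^ k` is translation by `k`, this gives `|r ^ k| ≥ lee k`, and `r ^ d` or `(r⁻¹) ^ (-d)`,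
with `d = valMinAbs k`, is a word attaining the bound.
-/

/-- The transposition `δ = (1 2)` in `S_n` (0-indexed: swaps `0` and `1`). -/
def delta (n : ℕ) (hn : 2 ≤ n) : Equiv.Perm (Fin n) :=
  Equiv.swap ⟨0, by omega⟩ ⟨1, by omega⟩

/-- The symmetric generating set `{(1 2), (1 2 … n), (1 n … 2)}` of `S_n`. -/
def gens (n : ℕ) (hn : 2 ≤ n) : Set (Equiv.Perm (Fin n)) :=
  {delta n hn, finRotate n, (finRotate n)⁻¹}

/-- `IsMinWordLen n hn g d` says that `d` is the minimal length of a word in the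
generators `{(1 2), (1 2 … n), (1 n … 2)}` whose product is `g`; i.e. the distance
in the Cayley graph from `1` to `g` is exactly `d`. -/
def IsMinWordLen (n : ℕ) (hn : 2 ≤ n) (g : Equiv.Perm (Fin n)) (d : ℕ) : Prop :=
  (∃ l : List (Equiv.Perm (Fin n)),
      (∀ x ∈ l, x ∈ gens n hn) ∧ l.prod = g ∧ l.length = d) ∧
  (∀ l : List (Equiv.Perm (Fin n)),
      (∀ x ∈ l, x ∈ gens n hn) → l.prod = g → d ≤ l.length)

theorem exists_list_prod_eq_zpow {G : Type*} [Group G] {S : Set G} {g : G} (hg : g ∈ S)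
    (hg' : g⁻¹ ∈ S) (d : ℤ) :
    ∃ l : List G, (∀ x ∈ l, x ∈ S) ∧ l.prod = g ^ d ∧ l.length = d.natAbs := by
  obtain ⟨k, rfl | rfl⟩ := Int.eq_nat_or_neg d
  · refine ⟨List.replicate k g, fun x hx => ?_, by simp, by simp⟩
    rwa [List.eq_of_mem_replicate hx]
  · refine ⟨List.replicate k g⁻¹, fun x hx => ?_, by simp, by simp⟩
    rwa [List.eq_of_mem_replicate hx]

theorem apply_list_prod_le_add_length {M : Type*} [Monoid M] {S : Set M} (f : M → ℕ)
    (hf : ∀ s ∈ S, ∀ g, f (s * g) ≤ f g + 1) :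
    ∀ l : List M, (∀ x ∈ l, x ∈ S) → f l.prod ≤ f 1 + l.length
  | [], _ => by simp
  | s :: l, hl => by
    have ih := apply_list_prod_le_add_length f hf l fun x hx => hl x (List.mem_cons_of_mem s hx)
    have := hf s (hl s List.mem_cons_self) l.prod
    rw [List.prod_cons, List.length_cons]
    omega

namespace ZMod

variable {n : ℕ}

theorem natAbs_valMinAbs_add_le_add (a b : ZMod n) :
    (a + b).valMinAbs.natAbs ≤ a.valMinAbs.natAbs + b.valMinAbs.natAbs :=
  (natAbs_valMinAbs_add_le a b).trans (Int.natAbs_add_le _ _)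

theorem natAbs_valMinAbs_one_le [NeZero n] : (1 : ZMod n).valMinAbs.natAbs ≤ 1 := by
  rw [valMinAbs_natAbs_eq_min, ← Nat.cast_one, val_natCast]
  exact (min_le_left _ _).trans (Nat.mod_le _ _)

theorem natAbs_valMinAbs_intCast [NeZero n] (k : ℤ) :
    (k : ZMod n).valMinAbs.natAbs = min (k.natAbs % n) (n - k.natAbs % n) := by
  rw [← val_natCast, ← valMinAbs_natAbs_eq_min]
  obtain ⟨m, rfl | rfl⟩ := Int.eq_nat_or_neg k
  · rw [Int.cast_natCast, Int.natAbs_natCast]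
  · rw [Int.cast_neg, Int.cast_natCast, natAbs_valMinAbs_neg, Int.natAbs_neg, Int.natAbs_natCast]

end ZMod

section

variable {n : ℕ} [NeZero n]

theorem finEquiv_finRotate (x : Fin n) :
    ZMod.finEquiv n (finRotate n x) = ZMod.finEquiv n x + 1 := by
  simp

theorem finEquiv_finRotate_inv (x : Fin n) :
    ZMod.finEquiv n ((finRotate n)⁻¹ x) = ZMod.finEquiv n x - 1 := by
  simp [Equiv.Perm.inv_def]

theorem finEquiv_finRotate_zpow (k : ℤ) (x : Fin n) :
    ZMod.finEquiv n ((finRotate n ^ k) x) = ZMod.finEquiv n x + k := by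
  induction k using Int.induction_on generalizing x with
  | zero => simp
  | succ k ih =>
    rw [zpow_add_one, Equiv.Perm.mul_apply, ih, finEquiv_finRotate]
    push_cast; ring
  | pred k ih =>
    rw [zpow_sub_one, Equiv.Perm.mul_apply, ih, finEquiv_finRotate_inv]
    push_cast; ring

theorem finRotate_zpow_eq_zpow {k m : ℤ} (h : (k : ZMod n) = m) :
    finRotate n ^ k = finRotate n ^ m := by
  ext x : 1
  apply (ZMod.finEquiv n).injective
  rw [finEquiv_finRotate_zpow, finEquiv_finRotate_zpow, h]

theorem natAbs_valMinAbs_finEquiv_sub_le_one (hn : 2 ≤ n) {s : Equiv.Perm (Fin n)}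
    (hs : s ∈ gens n hn) (y : Fin n) :
    (ZMod.finEquiv n (s y) - ZMod.finEquiv n y).valMinAbs.natAbs ≤ 1 := by
  have one_le := ZMod.natAbs_valMinAbs_one_le (n := n)
  rcases hs with rfl | rfl | rfl
  · have h0 : (⟨0, by omega⟩ : Fin n) = 0 := Fin.ext (Fin.val_zero n).symm
    have h1 : (⟨1, by omega⟩ : Fin n) = 1 := Fin.ext (by rw [Fin.val_one', Nat.mod_eq_of_lt hn])
    rw [delta, h0, h1]
    by_cases hy0 : y = 0
    · simp [hy0, one_le]
    by_cases hy1 : y = 1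
    · simp [hy1, one_le]
    · simp [Equiv.swap_apply_of_ne_of_ne hy0 hy1]
  · rw [finEquiv_finRotate, add_sub_cancel_left]
    exact one_le
  · rw [finEquiv_finRotate_inv, sub_sub_cancel_left, ZMod.natAbs_valMinAbs_neg]
    exact one_le

theorem natAbs_valMinAbs_finEquiv_apply_le (hn : 2 ≤ n) {s : Equiv.Perm (Fin n)}
    (hs : s ∈ gens n hn) (y : Fin n) :
    (ZMod.finEquiv n (s y)).valMinAbs.natAbs ≤ (ZMod.finEquiv n y).valMinAbs.natAbs + 1 := by
  have := ZMod.natAbs_valMinAbs_add_le_add (ZMod.finEquiv n y)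
    (ZMod.finEquiv n (s y) - ZMod.finEquiv n y)
  rw [add_sub_cancel] at this
  linarith [natAbs_valMinAbs_finEquiv_sub_le_one hn hs y]

theorem isMinWordLen_finRotate_zpow (hn : 2 ≤ n) (k : ℤ) :
    IsMinWordLen n hn (finRotate n ^ k) (k : ZMod n).valMinAbs.natAbs := by
  constructor
  · obtain ⟨l, hl, hprod, hlen⟩ := exists_list_prod_eq_zpow (S := gens n hn) (g := finRotate n)
      (by simp [gens]) (by simp [gens]) (k : ZMod n).valMinAbs
    exact ⟨l, hl, hprod.trans (finRotate_zpow_eq_zpow (by rw [ZMod.coe_valMinAbs])), hlen⟩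
  · intro l hl hprod
    have := apply_list_prod_le_add_length (fun g => (ZMod.finEquiv n (g 0)).valMinAbs.natAbs)
      (fun s hs g => natAbs_valMinAbs_finEquiv_apply_le hn hs (g 0)) l hl
    simpa [hprod, finEquiv_finRotate_zpow] using this

end

/-- For `n ≥ 3`, the word-metric distance between `r^i` and `r^j`
(`r = (1 2 … n)`, generators `{(1 2), r, r⁻¹}`) equals the Lee distance
`min(|i-j| mod n, n - |i-j| mod n)`. -/
theorem stmt6 (n : ℕ) (hn : 3 ≤ n) (i j : ℤ) :
    IsMinWordLen n (by omega) (((finRotate n) ^ i)⁻¹ * (finRotate n) ^ j)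
      (min ((i - j).natAbs % n) (n - (i - j).natAbs % n)) := by
  have : NeZero n := ⟨by omega⟩
  rw [← zpow_neg, ← zpow_add, neg_add_eq_sub, ← Int.natAbs_neg, neg_sub,
    ← ZMod.natAbs_valMinAbs_intCast]
  exact isMinWordLen_finRotate_zpow _ (j - i)
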